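/- arXiv:2603.20865 — 8 statements merged into one kernel-verified Lean document; each statement's English description precedes it below -/
import Mathlib

section
/- The staircase GP-polynomial factors completely: GP_{δ_r}(x_1,…,x_r | b) = x_1⋯x_r ∏_{1≤i<j≤r} (x_i ⊕ x_j), independent of the parameters b. Here GP_{δ_r}(x_1,…,x_r|b) = Σ_{w∈S_r} w( ∏_{i=1}^r x_i [x_i|b]^{r-i} ∏_{1≤i<j≤r} (x_i⊕x_j)/(x_i⊖x_j) ), with [x|b]^k = (x⊖b_1)⋯(x⊖b_k). -/
/-!
The substitution `z = x / (1 + β x)` turns the formal subtraction into ordinary subtraction up to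
a unit: `x ⊖ y = (1 + β x) (z x - z y)`. After it, the `r - 1 - i` factors `1 + β x_{w i}` coming
from `[x_{w i}|b]^{r-1-i}` cancel those of the denominators `x_{w i} ⊖ x_{w j}`, `j > i`; the
numerator `∏ (x_i ⊕ x_j)` is symmetric, and `∏_{i<j} (z_{w i} - z_{w j})` is `sign w` times the
Vandermonde product `Δ(z)`. So the sum is `∏ (x_i ⊕ x_j) / Δ(z)` times
`det [x_i ∏_{k < r-1-j} (z_i - z(b_k))]`, and this determinant is `x_1 ⋯ x_r Δ(z)` because its
columns are monic polynomials in `z_i` of degrees `r-1, …, 0`.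
-/

open Finset Matrix Equiv

section PairProducts

variable {M : Type*} [CommMonoid M] {n : ℕ}

theorem prod_Ioi_eq_prod_finPairsLT (f : Fin n → Fin n → M) :
    ∏ i, ∏ j ∈ Ioi i, f i j = ∏ p ∈ Perm.finPairsLT n, f p.2 p.1 := by
  rw [prod_sigma']
  refine prod_nbij' (fun p => ⟨p.2, p.1⟩) (fun p => ⟨p.2, p.1⟩) ?_ ?_ ?_ ?_ ?_ <;>
    simp [Perm.mem_finPairsLT]

theorem prod_Ioi_comp_perm_of_symm (F : Fin n → Fin n → M) (hF : ∀ i j, F i j = F j i)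
    (σ : Perm (Fin n)) :
    ∏ i, ∏ j ∈ Ioi i, F (σ i) (σ j) = ∏ i, ∏ j ∈ Ioi i, F i j := by
  simp only [prod_Ioi_eq_prod_finPairsLT]
  -- `signBijAux σ` is the bijection of `finPairsLT` induced by `σ` on unordered pairs
  refine prod_nbij (Perm.signBijAux σ) Perm.signBijAux_mem Perm.signBijAux_injOn
    Perm.signBijAux_surj fun p _ => ?_
  unfold Perm.signBijAux
  split_ifs
  · rfl
  · exact hF _ _

theorem prod_Ioi_const (f : Fin n → M) : ∏ i, ∏ _j ∈ Ioi i, f i = ∏ i, f i ^ (n - 1 - i) := by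
  simp only [prod_const, Fin.card_Ioi]

end PairProducts

namespace Matrix

variable {R : Type*} [CommRing R] {n : ℕ}

theorem det_projVandermonde_one (v : Fin n → R) :
    (projVandermonde 1 v).det = ∏ i, ∏ j ∈ Ioi i, (v i - v j) := by
  simp [det_projVandermonde]

theorem projVandermonde_one_comp (v : Fin n → R) (σ : Perm (Fin n)) :
    projVandermonde 1 (v ∘ σ) = (projVandermonde 1 v).submatrix σ id := by
  ext i j
  simp [projVandermonde, rectVandermonde]

theorem prod_Ioi_sub_comp_perm (v : Fin n → R) (σ : Perm (Fin n)) :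
    ∏ i, ∏ j ∈ Ioi i, (v (σ i) - v (σ j)) =
      Perm.sign σ * ∏ i, ∏ j ∈ Ioi i, (v i - v j) := by
  rw [← det_projVandermonde_one, ← det_projVandermonde_one, ← det_permute,
    ← projVandermonde_one_comp]
  rfl

theorem det_prod_range_sub_eq_prod_Ioi_sub [Nontrivial R] (v : Fin n → R) (c : ℕ → R) :
    (of fun i j : Fin n => ∏ k ∈ range (n - 1 - j), (v i - c k)).det =
      ∏ i, ∏ j ∈ Ioi i, (v i - v j) := by
  set p : Fin n → Polynomial R := fun j => ∏ k ∈ range j, (Polynomial.X - Polynomial.C (c k))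
  have hmonic : ∀ j, (p j).Monic := fun j => Polynomial.monic_prod_of_monic _ _ fun k _ =>
    Polynomial.monic_X_sub_C (c k)
  have hdeg : ∀ j, (p j).natDegree = j := fun j => by
    simp [p, Polynomial.natDegree_prod_of_monic _ _ fun k _ => Polynomial.monic_X_sub_C (c k)]
  have hrev : (of fun i j : Fin n => ∏ k ∈ range (n - 1 - j), (v i - c k)) =
      (of fun i j => (p j).eval (v i)).submatrix id Fin.revPerm := by
    ext i j
    simp [p, Polynomial.eval_prod, Fin.val_rev, Nat.sub_sub, add_comm]
  have hvand : projVandermonde 1 v = (vandermonde v).submatrix id Fin.revPerm := by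
    ext i j
    simp [projVandermonde, rectVandermonde, vandermonde]
  rw [hrev, det_permute', ← det_eval_matrixOfPolynomials_eq_det_vandermonde v p hdeg hmonic,
    ← det_permute', ← hvand, det_projVandermonde_one]

end Matrix

section ChangeOfVariables

variable {K : Type*} [Field K] {β : K}

theorem sub_div_one_add_mul_eq {x y : K} (hx : 1 + β * x ≠ 0) (hy : 1 + β * y ≠ 0) :
    (x - y) / (1 + β * y) = (1 + β * x) * (x / (1 + β * x) - y / (1 + β * y)) := by
  rw [div_sub_div _ _ hx hy, mul_div_assoc', div_eq_div_iff hy (mul_ne_zero hx hy)]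
  ring

theorem div_one_add_mul_sub_ne_zero {x y : K} (hx : 1 + β * x ≠ 0) (hy : 1 + β * y ≠ 0)
    (hxy : x ≠ y) : x / (1 + β * x) - y / (1 + β * y) ≠ 0 := by
  have h := sub_div_one_add_mul_eq hx hy
  exact right_ne_zero_of_mul (h ▸ div_ne_zero (sub_ne_zero.2 hxy) hy)

theorem staircase_summand_eq {n : ℕ} (v : Fin n → K) (b : ℕ → K)
    (hv : ∀ i, 1 + β * v i ≠ 0) (hb : ∀ k, 1 + β * b k ≠ 0) :
    (∏ i, (v i * ∏ k ∈ range (n - 1 - i), ((v i - b k) / (1 + β * b k)))) *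
        ∏ i, ∏ j ∈ Ioi i, ((v i + v j + β * v i * v j) / ((v i - v j) / (1 + β * v j))) =
      (∏ i, (v i * ∏ k ∈ range (n - 1 - i), (v i / (1 + β * v i) - b k / (1 + β * b k)))) *
        (∏ i, ∏ j ∈ Ioi i, (v i + v j + β * v i * v j)) /
          ∏ i, ∏ j ∈ Ioi i, (v i / (1 + β * v i) - v j / (1 + β * v j)) := by
  have hU : ∏ i, (1 + β * v i) ^ (n - 1 - i) ≠ 0 :=
    prod_ne_zero_iff.2 fun i _ => pow_ne_zero _ (hv i)
  have hA : ∏ i, (v i * ∏ k ∈ range (n - 1 - i), ((v i - b k) / (1 + β * b k))) =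
      (∏ i, (1 + β * v i) ^ (n - 1 - i)) *
        ∏ i, (v i * ∏ k ∈ range (n - 1 - i), (v i / (1 + β * v i) - b k / (1 + β * b k))) := by
    rw [← prod_mul_distrib]
    refine prod_congr rfl fun i _ => ?_
    simp only [sub_div_one_add_mul_eq (hv i) (hb _), prod_mul_distrib, prod_const, card_range]
    ring
  have hB : ∏ i, ∏ j ∈ Ioi i, ((v i + v j + β * v i * v j) / ((v i - v j) / (1 + β * v j))) =
      (∏ i, ∏ j ∈ Ioi i, (v i + v j + β * v i * v j)) / ((∏ i, (1 + β * v i) ^ (n - 1 - i)) *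
        ∏ i, ∏ j ∈ Ioi i, (v i / (1 + β * v i) - v j / (1 + β * v j))) := by
    simp_rw [sub_div_one_add_mul_eq (hv _) (hv _), prod_div_distrib, prod_mul_distrib,
      prod_Ioi_const]
  rw [hA, hB, mul_assoc, mul_div_assoc', mul_div_assoc', mul_div_mul_left _ _ hU]

end ChangeOfVariables

/-- The staircase GP-polynomial factors completely:
`GP_{δ_r}(x₁,…,x_r | b) = x₁⋯x_r ∏_{i<j} (x_i ⊕ x_j)`, independent of the parameters `b`.
Here `GP_{δ_r}(x|b) = Σ_{w∈S_r} w(∏_i x_i [x_i|b]^{r-i} ∏_{i<j} (x_i⊕x_j)/(x_i⊖x_j))`,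
with `x ⊕ y = x+y+βxy`, `x ⊖ y = (x-y)/(1+βy)`, `[x|b]^k = (x⊖b₁)⋯(x⊖b_k)`. -/
theorem stmt_2 {K : Type*} [Field K] (r : ℕ) (β : K) (x : Fin r → K) (b : ℕ → K)
    (hx : Function.Injective x)
    (hxu : ∀ i, 1 + β * x i ≠ 0) (hbu : ∀ j, 1 + β * b j ≠ 0) :
    ∑ w : Equiv.Perm (Fin r),
      ((∏ i : Fin r, (x (w i) *
          ∏ k ∈ Finset.range (r - 1 - (i : ℕ)), ((x (w i) - b k) / (1 + β * b k)))) *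
        ∏ i : Fin r, ∏ j ∈ Finset.Ioi i,
          ((x (w i) + x (w j) + β * x (w i) * x (w j)) /
            ((x (w i) - x (w j)) / (1 + β * x (w j))))) =
    (∏ i : Fin r, x i) * ∏ i : Fin r, ∏ j ∈ Finset.Ioi i,
      (x i + x j + β * x i * x j) := by
  set z : K → K := fun t => t / (1 + β * t)
  set P := ∏ i : Fin r, ∏ j ∈ Ioi i, (x i + x j + β * x i * x j)
  set V := ∏ i : Fin r, ∏ j ∈ Ioi i, (z (x i) - z (x j))
  have hV : V ≠ 0 := prod_ne_zero_iff.2 fun i _ => prod_ne_zero_iff.2 fun j hj =>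
    div_one_add_mul_sub_ne_zero (hxu i) (hxu j) (hx.ne (mem_Ioi.1 hj).ne)
  calc _ = ∑ w : Perm (Fin r), P / V * (Perm.sign w *
        ∏ i, (x (w i) * ∏ k ∈ range (r - 1 - i), (z (x (w i)) - z (b k)))) := by
        refine sum_congr rfl fun w _ => ?_
        rw [staircase_summand_eq (fun i => x (w i)) b (fun i => hxu (w i)) hbu,
          prod_Ioi_comp_perm_of_symm (fun a c => x a + x c + β * x a * x c) (fun _ _ => by ring),
          prod_Ioi_sub_comp_perm (fun i => z (x i)) w]
        rcases Int.units_eq_one_or (Perm.sign w) with h | h <;>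
          simp only [h, z, V, P, Units.val_one, Units.val_neg, Int.cast_one, Int.cast_neg] <;> ring
    _ = P / V * (of fun i j : Fin r => x i * ∏ k ∈ range (r - 1 - j), (z (x i) - z (b k))).det := by
        rw [det_apply', mul_sum]
        rfl
    _ = P / V * ((∏ i, x i) * V) := by
        have h := det_mul_column x
          (of fun i j : Fin r => ∏ k ∈ range (r - 1 - j), (z (x i) - z (b k)))
        rw [det_prod_range_sub_eq_prod_Ioi_sub] at h
        exact congrArg _ h
    _ = (∏ i, x i) * P := by field_simp
end

section
/- For a partition λ of length at most r, GP_{δ_r+λ}(x_1,…,x_r|b) = GP_{δ_r}(x_1,…,x_r) · G_λ(x_1,…,x_r|b), where G_λ(x_1,…,x_r|b) = Σ_{w∈S_r} w( ∏_i [x_i|b]^{λ_i+r-i} / ∏_{i<j}(x_i⊖x_j) ) is the factorial Grothendieck polynomial and GP_{δ_r}(x) = x_1⋯x_r ∏_{i<j}(x_i⊕x_j). -/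
/-!
The factor `x₁⋯x_r ∏_{i<j} (x_i ⊕ x_j)` is symmetric in `x`, so it comes out of every summand
`w(∏ x_i [x_i|b]^{λ_i+r-i} ∏_{i<j} (x_i ⊕ x_j)/(x_i ⊖ x_j))` of `GP_{δ_r+λ}`, leaving exactly
the summand `w(∏ [x_i|b]^{λ_i+r-i} / ∏_{i<j} (x_i ⊖ x_j))` of `G_λ`.
-/

open Finset

theorem Equiv.Perm.prod_Ioi_comp_eq_prod_of_symm {M : Type*} [CommMonoid M] {n : ℕ}
    (σ : Equiv.Perm (Fin n)) {f : Fin n → Fin n → M} (hf : ∀ i j, f i j = f j i) :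
    ∏ i, ∏ j ∈ Ioi i, f (σ i) (σ j) = ∏ i, ∏ j ∈ Ioi i, f i j := by
  simp_rw [prod_sigma']
  -- an unordered pair `{i, j}` is sent to the unordered pair `{σ i, σ j}`
  refine prod_nbij' (fun p => ⟨σ p.1 ⊓ σ p.2, σ p.1 ⊔ σ p.2⟩)
    (fun p => ⟨σ.symm p.1 ⊓ σ.symm p.2, σ.symm p.1 ⊔ σ.symm p.2⟩) ?_ ?_ ?_ ?_ ?_
  all_goals
    rintro ⟨i, j⟩ hij
    simp only [mem_sigma, mem_univ, mem_Ioi, true_and] at hij ⊢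
  · exact inf_lt_sup.2 (σ.injective.ne hij.ne)
  · exact inf_lt_sup.2 (σ.symm.injective.ne hij.ne)
  · rcases le_total (σ i) (σ j) with h | h <;> simp [h, hij.le]
  · rcases le_total (σ.symm i) (σ.symm j) with h | h <;> simp [h, hij.le]
  · rcases le_total (σ i) (σ j) with h | h <;> simp [h, hf]

theorem stmt_3_general {K : Type*} [Field K] (r : ℕ) (β : K) (x : Fin r → K) (b : ℕ → K)
    (lam : Fin r → ℕ) :
    ∑ w : Equiv.Perm (Fin r),
      ((∏ i : Fin r, (x (w i) *
          ∏ k ∈ Finset.range (lam i + (r - 1 - (i : ℕ))),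
            ((x (w i) - b k) / (1 + β * b k)))) *
        ∏ i : Fin r, ∏ j ∈ Finset.Ioi i,
          ((x (w i) + x (w j) + β * x (w i) * x (w j)) /
            ((x (w i) - x (w j)) / (1 + β * x (w j))))) =
    ((∏ i : Fin r, x i) * ∏ i : Fin r, ∏ j ∈ Finset.Ioi i,
        (x i + x j + β * x i * x j)) *
      ∑ w : Equiv.Perm (Fin r),
        (∏ i : Fin r, ∏ k ∈ Finset.range (lam i + (r - 1 - (i : ℕ))),
            ((x (w i) - b k) / (1 + β * b k))) /
          ∏ i : Fin r, ∏ j ∈ Finset.Ioi i,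
            ((x (w i) - x (w j)) / (1 + β * x (w j))) := by
  rw [mul_sum]
  refine sum_congr rfl fun w _ => ?_
  have hsymm : ∏ i, ∏ j ∈ Ioi i, (x (w i) + x (w j) + β * x (w i) * x (w j)) =
      ∏ i, ∏ j ∈ Ioi i, (x i + x j + β * x i * x j) :=
    w.prod_Ioi_comp_eq_prod_of_symm (f := fun i j => x i + x j + β * x i * x j)
      fun i j => by ring
  simp only [prod_div_distrib, prod_mul_distrib, hsymm, Equiv.prod_comp w x]
  ring

/-- For a partition `λ` of length at most `r`,
`GP_{δ_r+λ}(x₁,…,x_r|b) = GP_{δ_r}(x₁,…,x_r) · G_λ(x₁,…,x_r|b)`, where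
`G_λ(x|b) = Σ_{w∈S_r} w(∏_i [x_i|b]^{λ_i+r-i} / ∏_{i<j}(x_i⊖x_j))` is the factorial
Grothendieck polynomial and `GP_{δ_r}(x) = x₁⋯x_r ∏_{i<j}(x_i⊕x_j)`.
Here `(δ_r+λ)_i = λ_i + r - i + 1` (1-indexed), so the GP-factorial exponent is
`λ_i + r - i` (1-indexed), i.e. `λ i + (r - 1 - i)` with 0-indexed `i : Fin r`. -/
theorem stmt_3 {K : Type*} [Field K] (r : ℕ) (β : K) (x : Fin r → K) (b : ℕ → K)
    (lam : Fin r → ℕ) (hlam : Antitone lam)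
    (hx : Function.Injective x)
    (hxu : ∀ i, 1 + β * x i ≠ 0) (hbu : ∀ j, 1 + β * b j ≠ 0) :
    ∑ w : Equiv.Perm (Fin r),
      ((∏ i : Fin r, (x (w i) *
          ∏ k ∈ Finset.range (lam i + (r - 1 - (i : ℕ))),
            ((x (w i) - b k) / (1 + β * b k)))) *
        ∏ i : Fin r, ∏ j ∈ Finset.Ioi i,
          ((x (w i) + x (w j) + β * x (w i) * x (w j)) /
            ((x (w i) - x (w j)) / (1 + β * x (w j))))) =
    ((∏ i : Fin r, x i) * ∏ i : Fin r, ∏ j ∈ Finset.Ioi i,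
        (x i + x j + β * x i * x j)) *
      ∑ w : Equiv.Perm (Fin r),
        (∏ i : Fin r, ∏ k ∈ Finset.range (lam i + (r - 1 - (i : ℕ))),
            ((x (w i) - b k) / (1 + β * b k))) /
          ∏ i : Fin r, ∏ j ∈ Finset.Ioi i,
            ((x (w i) - x (w j)) / (1 + β * x (w j))) :=
  stmt_3_general r β x b lam
end

section
/- Contour/coefficient extraction identity: for integers A, B, m > 0, n, d ≥ 0, the coefficient of u^{m+d} w^n in (1+βw)^A (1+βu^{-1})^B · [∏_{k=1}^{m-1}(1 - u c_k)] / [∏_{k=1}^n (1 - w^{-1} b_k)] · uw/(1-uw) equals Σ_{l≥0} C(A+B, l) β^l h_{l-n+m+d}(b_1,…,b_n; -c_1,…,-c_{m-1}), where h_p(b; -c) denotes the complete supersymmetric function (generating function ∏(1-c_kt)/∏(1-b_kt)) and h_p = 0 for p < 0; binomial coefficients with negative upper entry are C(-N,l) = (-1)^l C(N+l-1, l). -/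
/-!
Reading off exponents, a triple `(s, e, j)` contributes to the left side only if
`j = s + (m + d - |dC|)`, which is automatically `≥ 1` because `|dC| ≤ m - 1`, and
`e + s = L := n + |dB| + |dC| - (m + d)`. The left side is therefore
`β^L (-1)^|dC| ∑_{e+s=L} C(A,e) C(B,s)`, which by Chu–Vandermonde is the single
surviving term `l = L` of the right side.
-/

open Finset

/-- Generalized binomial coefficient `C(z, k)` with integer upper entry, in a field of
characteristic zero: `C(z,k) = z(z-1)⋯(z-k+1)/k!`.  For `z = -N < 0` this gives
`(-1)^k C(N+k-1, k)`. -/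
noncomputable def gbinom {K : Type*} [Field K] (z : ℤ) (k : ℕ) : K :=
  (∏ i ∈ Finset.range k, ((z : K) - (i : K))) / (Nat.factorial k : K)

open Polynomial in
theorem gbinom_eq_ringChoose {K : Type*} [Field K] [CharZero K] (z : ℤ) (k : ℕ) :
    gbinom (K := K) z k = Ring.choose (z : K) k := by
  rw [Ring.choose_eq_smul, ← aeval_eq_smeval, aeval_def, ← eval_map, descPochhammer_map,
    descPochhammer_eval_eq_prod_range, gbinom, smul_eq_mul, div_eq_inv_mul]

theorem gbinom_add {K : Type*} [Field K] [CharZero K] (A B : ℤ) (k : ℕ) :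
    gbinom (K := K) (A + B) k = ∑ p ∈ antidiagonal k, gbinom (K := K) A p.1 * gbinom B p.2 := by
  simp only [gbinom_eq_ringChoose, Int.cast_add]
  exact Ring.add_choose_eq k (Commute.all _ _)

section

variable {M : Type*} [AddCommMonoid M]

theorem finsum_exponentTriples_eq_sum_antidiagonal (F : ℕ → ℕ → M) {m d n SB SC L : ℕ}
    (hSC : SC < m) (hL : n + SB + SC = m + d + L) :
    ∑ᶠ x : ℕ × ℕ × ℕ, (if 1 ≤ x.2.2 ∧ (x.2.2 : ℤ) - x.1 + SC = m + d ∧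
        (x.2.1 : ℤ) + x.2.2 - SB = n then F x.2.1 x.1 else 0) =
      ∑ p ∈ antidiagonal L, F p.1 p.2 := by
  let φ (p : ℕ × ℕ) : ℕ × ℕ × ℕ := (p.2, p.1, p.2 + (m + d - SC))
  have hφ : φ.Injective := fun p q h => by simp_all [φ, Prod.ext_iff]
  rw [finsum_eq_sum_of_support_subset (s := (antidiagonal L).map ⟨φ, hφ⟩), sum_map]
  · refine sum_congr rfl fun p hp => if_pos ?_
    rw [HasAntidiagonal.mem_antidiagonal] at hp
    simp only [Function.Embedding.coeFn_mk, φ]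
    omega
  · rintro ⟨s, e, j⟩ hx
    obtain ⟨hj, hs, he⟩ : 1 ≤ j ∧ (j : ℤ) - s + SC = m + d ∧ (e : ℤ) + j - SB = n :=
      not_imp_comm.1 (fun h => if_neg h) hx
    simp only [coe_map, Set.mem_image, mem_coe, HasAntidiagonal.mem_antidiagonal,
      Function.Embedding.coeFn_mk, Prod.exists, Prod.mk.injEq, φ]
    exact ⟨e, s, by omega, rfl, rfl, by omega⟩

theorem finsum_exponentTriples_eq_zero (F : ℕ → ℕ → M) {m d n SB SC : ℕ}
    (h : n + SB + SC < m + d) :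
    ∑ᶠ x : ℕ × ℕ × ℕ, (if 1 ≤ x.2.2 ∧ (x.2.2 : ℤ) - x.1 + SC = m + d ∧
        (x.2.1 : ℤ) + x.2.2 - SB = n then F x.2.1 x.1 else 0) = 0 :=
  finsum_eq_zero_of_forall_eq_zero fun _ => if_neg (by omega)

end

theorem sum_lt_of_forall_le_one {m : ℕ} (hm : 0 < m) {f : Fin (m - 1) → ℕ}
    (hf : ∀ k, f k ≤ 1) :
    ∑ k, f k < m := by
  have : ∑ k, f k ≤ ∑ _k : Fin (m - 1), 1 := sum_le_sum fun k _ => hf k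
  rw [sum_const, card_univ, Fintype.card_fin, smul_eq_mul, mul_one] at this
  omega

section
variable {K : Type*} [Field K] [CharZero K]

theorem finsum_coeff_eq_finsum_gbinom_add (β c : K) (A B : ℤ) {m : ℕ} (n d SB SC : ℕ)
    (hSC : SC < m) :
    ∑ᶠ x : ℕ × ℕ × ℕ, (if 1 ≤ x.2.2 ∧ (x.2.2 : ℤ) - x.1 + SC = m + d ∧
        (x.2.1 : ℤ) + x.2.2 - SB = n then
          gbinom (K := K) A x.2.1 * β ^ x.2.1 * gbinom B x.1 * β ^ x.1 * c else 0) =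
      ∑ᶠ l : ℕ, gbinom (K := K) (A + B) l * β ^ l *
        (if (l : ℤ) - n + m + d = SB + SC then c else 0) := by
  let F (e s : ℕ) : K := gbinom A e * β ^ e * gbinom B s * β ^ s * c
  rcases lt_or_ge (n + SB + SC) (m + d) with hlt | hle
  · refine (finsum_exponentTriples_eq_zero F hlt).trans ?_
    exact (finsum_eq_zero_of_forall_eq_zero fun l => by rw [if_neg (by omega), mul_zero]).symm
  · obtain ⟨L, hL⟩ := Nat.exists_eq_add_of_le hle
    rw [finsum_eq_single _ L fun l hl => by rw [if_neg (by omega), mul_zero], if_pos (by omega),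
      gbinom_add, sum_mul, sum_mul]
    refine (finsum_exponentTriples_eq_sum_antidiagonal F hSC hL).trans
      (sum_congr rfl fun p hp => ?_)
    rw [← HasAntidiagonal.mem_antidiagonal.1 hp, pow_add]
    ring

end

/-- Treating the `b_k` and `c_k` as independent variables, the identity is compared
coefficientwise in each monomial `b^dB c^dC`; `sej = (s, e, j)` records the exponents of
`u⁻¹` in `(1+βu⁻¹)^B`, of `w` in `(1+βw)^A` and of `uw` in `uw/(1-uw)`, and only
squarefree `c`-monomials occur, with sign `(-1)^|dC|` and `u`-exponent `|dC|`. -/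
theorem stmt_9 {K : Type*} [Field K] [CharZero K] (β : K)
    (A B : ℤ) (m n d : ℕ) (hm : 0 < m) :
    ∀ (dB : Fin n → ℕ) (dC : Fin (m - 1) → ℕ),
      (∑ᶠ sej : ℕ × ℕ × ℕ,
        (if 1 ≤ sej.2.2 ∧
            ((sej.2.2 : ℤ) - (sej.1 : ℤ) + (∑ k, dC k : ℕ) = (m : ℤ) + d) ∧
            ((sej.2.1 : ℤ) + (sej.2.2 : ℤ) - (∑ k, dB k : ℕ) = (n : ℤ)) ∧
            (∀ k, dC k ≤ 1)
          then gbinom (K := K) A sej.2.1 * β ^ sej.2.1 *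
            gbinom (K := K) B sej.1 * β ^ sej.1 * (-1 : K) ^ (∑ k, dC k)
          else 0)) =
      ∑ᶠ l : ℕ, gbinom (K := K) (A + B) l * β ^ l *
        (if (∀ k, dC k ≤ 1) ∧
            ((l : ℤ) - n + m + d = (∑ k, dB k : ℕ) + (∑ k, dC k : ℕ))
          then (-1 : K) ^ (∑ k, dC k) else 0) := by
  intro dB dC
  by_cases hC : ∀ k, dC k ≤ 1
  · simp only [hC, implies_true, and_true, true_and]
    exact finsum_coeff_eq_finsum_gbinom_add β _ A B n d _ _ (sum_lt_of_forall_le_one hm hC)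
  · simp only [hC, and_false, false_and, if_false, mul_zero, finsum_zero]
end

section
/- Triangularity of the transition matrix at equal parameters: let λ, μ be strict partitions of length r, and define the r×r matrix D with entries D_{ij} = Σ_{k≥0} β^k C(i-j, k) h_{μ_i - λ_j + k}(b_1,…,b_{λ_j}; -b_1,…,-b_{μ_i-1}) (with the supersymmetric complete homogeneous functions h and generalized binomial coefficients C(-N,k) = (-1)^k C(N+k-1,k)). If λ_i ≤ μ_i for all i, then D_{ii} = δ_{λ_i μ_i} and D_{ij} = 0 for i < j; consequently det(D) = δ_{λμ}. -/
/-!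
The generating function of `hsup a m b c` is `∏_{k<m} (1 - c_k t) / ∏_{k<a} (1 - b_k t)`. When
`c = b` and `a ≤ m` the denominator cancels, leaving the polynomial `∏_{a≤k<m} (1 - b_k t)` of
degree `m - a`. In the entry `D i j` with `λ_j < μ_i` every index `μ_i - λ_j + k` exceeds
`(μ_i - 1) - λ_j`, so the entry vanishes; this covers `i < j` (as `λ_j < λ_i ≤ μ_i`) and the
diagonal when `λ_i ≠ μ_i`. On the diagonal `C(0, k) = 0` for `k > 0`, so only the `k = 0` term
`h_0 = 1` survives when `λ_i = μ_i`. Hence `D` is lower triangular and its determinant is the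
product of its diagonal entries.
-/

open Finset

/-- Complete homogeneous symmetric function `h_p(v 0, …, v (a-1))` of `a` variables. -/
def hpoly {K : Type*} [CommRing K] (a : ℕ) (v : ℕ → K) (p : ℕ) : K :=
  ∑ dd ∈ Finset.Nat.antidiagonalTuple a p, ∏ i : Fin a, v i ^ dd i

/-- Elementary symmetric function `e_t(v 0, …, v (a-1))` of `a` variables. -/
def epoly {K : Type*} [CommRing K] (a : ℕ) (v : ℕ → K) (t : ℕ) : K :=
  ∑ S ∈ Finset.powersetCard t (Finset.range a), ∏ i ∈ S, v i

/-- Supersymmetric complete homogeneous function `h_p(b₁,…,b_a; -c₁,…,-c_C)`, with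
generating function `∏_{k=1}^{C}(1-c_k t)/∏_{k=1}^{a}(1-b_k t) = Σ_p h_p t^p`; it is
`Σ_t (-1)^t e_t(c) h_{p-t}(b)` for `p ≥ 0` and `0` for `p < 0`. -/
noncomputable def hsup {K : Type*} [CommRing K] (a C : ℕ) (b c : ℕ → K) (p : ℤ) : K :=
  if 0 ≤ p then
    ∑ t ∈ Finset.range (p.toNat + 1), (-1 : K) ^ t * epoly C c t * hpoly a b (p.toNat - t)
  else 0

open PowerSeries

section GeneratingFunctions

variable {R : Type*} [CommRing R]

theorem mk_pow_mul_one_sub_C_mul_X (x : R) : (mk fun q => x ^ q) * (1 - C x * X) = 1 := by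
  simpa [rescale_mk, rescale_X] using congrArg (rescale x) (mk_one_mul_one_sub_eq_one (S := R))

theorem coeff_prod_one_sub_C_mul_X {ι : Type*} (s : Finset ι) (v : ι → R) (t : ℕ) :
    coeff t (∏ k ∈ s, (1 - C (v k) * X)) =
      (-1) ^ t * ∑ S ∈ s.powersetCard t, ∏ k ∈ S, v k := by
  classical
  have expand : ∏ k ∈ s, (1 - C (v k) * X) =
      ∑ S ∈ s.powerset, C (∏ k ∈ S, -v k) * X ^ S.card := by
    simp_rw [sub_eq_add_neg, prod_one_add, ← neg_mul, ← map_neg, prod_mul_distrib, ← map_prod,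
      prod_const]
  rw [expand, map_sum, mul_sum, powersetCard_eq_filter, sum_filter]
  refine sum_congr rfl fun S _ => ?_
  rw [coeff_C_mul_X_pow, prod_neg]
  obtain rfl | h := eq_or_ne #S t
  · simp
  · simp [h, h.symm]

theorem mk_hpoly (a : ℕ) (v : ℕ → R) :
    mk (hpoly a v) = ∏ k ∈ range a, mk fun q => v k ^ q := by
  classical
  ext p
  rw [coeff_mk, ← Fin.prod_univ_eq_prod_range (fun k => mk fun q => v k ^ q), coeff_prod, hpoly]
  refine sum_nbij' (fun d => Finsupp.equivFunOnFinite.symm d) (fun l => ⇑l) ?_ ?_ ?_ ?_ ?_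
  · intro d hd
    simp only [mem_finsuppAntidiag]
    exact ⟨by simpa [Finsupp.sum] using Nat.mem_antidiagonalTuple.mp hd, subset_univ _⟩
  · intro l hl
    simpa [Nat.mem_antidiagonalTuple] using (mem_finsuppAntidiag.mp hl).1
  · intro d _; simp [Finsupp.equivFunOnFinite]
  · intro l _; simp
  · intro d _; simp [coeff_mk]

theorem prod_one_sub_C_mul_X_mul_mk_hpoly (a : ℕ) (v : ℕ → R) :
    (∏ k ∈ range a, (1 - C (v k) * X)) * mk (hpoly a v) = 1 := by
  rw [mk_hpoly, ← prod_mul_distrib]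
  exact prod_eq_one fun k _ => by rw [mul_comm, mk_pow_mul_one_sub_C_mul_X]

theorem hsup_natCast (a m : ℕ) (b c : ℕ → R) (p : ℕ) :
    hsup a m b c p = coeff p ((∏ k ∈ range m, (1 - C (c k) * X)) * mk (hpoly a b)) := by
  rw [hsup, if_pos p.cast_nonneg, Int.toNat_natCast, coeff_mul,
    Nat.sum_antidiagonal_eq_sum_range_succ_mk]
  refine sum_congr rfl fun t _ => ?_
  rw [coeff_prod_one_sub_C_mul_X, coeff_mk]
  rfl

theorem hsup_zero (a m : ℕ) (b c : ℕ → R) : hsup a m b c 0 = 1 := by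
  simp [hsup, epoly, hpoly, Nat.antidiagonalTuple_zero_right]

theorem hsup_self_natCast_of_le {a m : ℕ} (hle : a ≤ m) (v : ℕ → R) (p : ℕ) :
    hsup a m v v p = coeff p (∏ k ∈ Ico a m, (1 - C (v k) * X)) := by
  rw [hsup_natCast, ← prod_range_mul_prod_Ico _ hle, mul_right_comm,
    prod_one_sub_C_mul_X_mul_mk_hpoly, one_mul]

theorem hsup_self_eq_zero {a m : ℕ} (hle : a ≤ m) (v : ℕ → R) {p : ℤ}
    (hp : (m : ℤ) - a < p) :
    hsup a m v v p = 0 := by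
  lift p to ℕ using by omega
  rw [hsup_self_natCast_of_le hle, coeff_prod_one_sub_C_mul_X,
    powersetCard_eq_empty.mpr (by rw [Nat.card_Ico]; omega), sum_empty, mul_zero]

end GeneratingFunctions

section Binomial

variable {K : Type*} [Field K]

theorem gbinom_zero_right (z : ℤ) : gbinom (K := K) z 0 = 1 := by
  simp [gbinom]

theorem gbinom_zero_left {k : ℕ} (hk : k ≠ 0) : gbinom (K := K) 0 k = 0 := by
  rw [gbinom, prod_eq_zero (mem_range.mpr (Nat.pos_of_ne_zero hk)) (by simp), zero_div]

end Binomial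

theorem stmt_10_general {K : Type*} [Field K] (β : K) (r : ℕ)
    (lam mu : Fin r → ℕ) (b : ℕ → K)
    (hlam : ∀ i j : Fin r, i < j → lam j < lam i)
    (hle : ∀ i, lam i ≤ mu i)
    (D : Matrix (Fin r) (Fin r) K)
    (hD : ∀ i j, D i j = ∑ᶠ k : ℕ,
      β ^ k * gbinom (K := K) ((i : ℤ) - (j : ℤ)) k *
        hsup (lam j) (mu i - 1) b b ((mu i : ℤ) - (lam j : ℤ) + k)) :
    (∀ i, D i i = if lam i = mu i then 1 else 0) ∧
    (∀ i j, i < j → D i j = 0) ∧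
    D.det = (if lam = mu then 1 else 0) := by
  have hvanish (i j : Fin r) (k : ℕ) (h : lam j < mu i) :
      hsup (lam j) (mu i - 1) b b ((mu i : ℤ) - lam j + k) = 0 :=
    hsup_self_eq_zero (by omega) b (by omega)
  have hdiag (i : Fin r) : D i i = if lam i = mu i then 1 else 0 := by
    have higher_terms_vanish (k : ℕ) (hk : k ≠ 0) :
        β ^ k * gbinom (K := K) 0 k * hsup (lam i) (mu i - 1) b b ((mu i : ℤ) - lam i + k) =
          0 := by
      rw [gbinom_zero_left hk, mul_zero, zero_mul]
    rw [hD, sub_self, finsum_eq_single _ 0 higher_terms_vanish, pow_zero, gbinom_zero_right,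
      one_mul, one_mul]
    split_ifs with h
    · rw [h, Nat.cast_zero, sub_self, add_zero, hsup_zero]
    · exact hvanish i i 0 ((hle i).lt_of_ne h)
  have htri (i j : Fin r) (hij : i < j) : D i j = 0 := by
    rw [hD]
    exact finsum_eq_zero_of_forall_eq_zero fun k => by
      rw [hvanish i j k ((hlam i j hij).trans_le (hle i)), mul_zero]
  refine ⟨hdiag, htri, ?_⟩
  rw [Matrix.det_of_isLowerTriangular D fun i j h => htri i j h]
  simp [hdiag, Fintype.prod_boole, funext_iff]

/-- Triangularity of the transition matrix at equal parameters.  For strict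
partitions `λ, μ` of length `r`, let `D_{ij} = Σ_{k≥0} β^k C(i-j,k)
h_{μ_i - λ_j + k}(b₁,…,b_{λ_j}; -b₁,…,-b_{μ_i-1})`.  If `λ_i ≤ μ_i` for all `i`, then
`D_{ii} = δ_{λ_i μ_i}`, `D_{ij} = 0` for `i < j`, and consequently `det D = δ_{λμ}`. -/
theorem stmt_10 {K : Type*} [Field K] [CharZero K] (β : K) (r : ℕ)
    (lam mu : Fin r → ℕ) (b : ℕ → K)
    (hlam : ∀ i j : Fin r, i < j → lam j < lam i) (hlampos : ∀ i, 0 < lam i)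
    (hmu : ∀ i j : Fin r, i < j → mu j < mu i) (hmupos : ∀ i, 0 < mu i)
    (hle : ∀ i, lam i ≤ mu i)
    (D : Matrix (Fin r) (Fin r) K)
    (hD : ∀ i j, D i j = ∑ᶠ k : ℕ,
      β ^ k * gbinom (K := K) ((i : ℤ) - (j : ℤ)) k *
        hsup (lam j) (mu i - 1) b b ((mu i : ℤ) - (lam j : ℤ) + k)) :
    (∀ i, D i i = if lam i = mu i then 1 else 0) ∧
    (∀ i j, i < j → D i j = 0) ∧
    D.det = (if lam = mu then 1 else 0) :=
  stmt_10_general β r lam mu b hlam hle D hD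
end

section
/- Vanishing by containment: with λ, μ strict partitions of length r and D_{ij} = Σ_{k≥0} β^k C(i-j,k) h_{μ_i - λ_j + k}(b_1,…,b_{λ_j}; -c_1,…,-c_{μ_i-1}), if there exists an index a with λ_a > μ_a, then det(D) = 0. -/
open Finset

/-!
Index the rows and columns from `0`. Since `λ` and `μ` strictly decrease, `λ_j + j` and `μ_i + i`
are antitone in the index, so `μ_a < λ_a` gives `μ_i - λ_j + (i - j) < 0` whenever `j ≤ a ≤ i`.
In the entry `D_{ij}` the term of index `k` vanishes for `k ≤ i - j` because `h` of a negative
degree is zero, and for `k > i - j` because `C(i - j, k) = 0`. So `D` has a zero block of size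
`(r - a) × (a + 1)`, which no permutation can avoid.
-/

theorem Matrix.det_eq_zero_of_card_lt_of_eq_zero {n R : Type*} [Fintype n] [DecidableEq n]
    [CommRing R] (M : Matrix n n R) (s t : Finset n) (hst : #t < #s)
    (hM : ∀ i ∉ t, ∀ j ∈ s, M i j = 0) : M.det = 0 := by
  rw [Matrix.det_apply]
  refine Finset.sum_eq_zero fun σ _ => ?_
  obtain ⟨j, hjs, hσj⟩ : ∃ j ∈ s, σ j ∉ t := by
    by_contra! h
    exact hst.not_ge (card_le_card_of_injOn σ h σ.injective.injOn)
  have hprod : ∏ i, M (σ i) i = 0 := prod_eq_zero (mem_univ j) (hM (σ j) hσj j hjs)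
  rw [hprod, smul_zero]

theorem Fin.antitone_add_val_of_strictAnti {n : ℕ} {f : Fin n → ℕ} (hf : StrictAnti f) :
    Antitone fun i => f i + (i : ℕ) := by
  cases n with
  | zero => exact fun i => i.elim0
  | succ n =>
    refine Fin.antitone_iff_succ_le.2 fun i => ?_
    have := hf (Fin.castSucc_lt_succ (i := i))
    simp only [Fin.val_succ, Fin.val_castSucc]
    omega

theorem gbinom_eq_zero_of_nonneg_of_lt {K : Type*} [Field K] {z : ℤ} {k : ℕ} (hz : 0 ≤ z)
    (hzk : z < k) : gbinom (K := K) z k = 0 := by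
  have hmem : z.toNat ∈ range k := mem_range.2 (by omega)
  rw [gbinom, Finset.prod_eq_zero hmem (by rw [← Int.cast_natCast, Int.toNat_of_nonneg hz,
    sub_self]), zero_div]

theorem hsup_of_neg {K : Type*} [CommRing K] (a C : ℕ) (b c : ℕ → K) {p : ℤ} (hp : p < 0) :
    hsup a C b c p = 0 :=
  if_neg hp.not_ge

theorem finsum_gbinom_mul_hsup_eq_zero {K : Type*} [Field K] (β : K) (a C : ℕ) (b c : ℕ → K)
    {d p : ℤ} (hd : 0 ≤ d) (hpd : p + d < 0) :
    ∑ᶠ k : ℕ, β ^ k * gbinom (K := K) d k * hsup a C b c (p + k) = 0 := by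
  refine finsum_eq_zero_of_forall_eq_zero fun k => ?_
  rcases le_or_gt (k : ℤ) d with hk | hk
  · rw [hsup_of_neg a C b c (by omega), mul_zero]
  · rw [gbinom_eq_zero_of_nonneg_of_lt hd hk, mul_zero, zero_mul]

theorem stmt_11_general {K : Type*} [Field K] (β : K) (r : ℕ)
    (lam mu : Fin r → ℕ) (b c : ℕ → K)
    (hlam : ∀ i j : Fin r, i < j → lam j < lam i)
    (hmu : ∀ i j : Fin r, i < j → mu j < mu i)
    (ha : ∃ a : Fin r, mu a < lam a)
    (D : Matrix (Fin r) (Fin r) K)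
    (hD : ∀ i j, D i j = ∑ᶠ k : ℕ,
      β ^ k * gbinom (K := K) ((i : ℤ) - (j : ℤ)) k *
        hsup (lam j) (mu i - 1) b c ((mu i : ℤ) - (lam j : ℤ) + k)) :
    D.det = 0 := by
  obtain ⟨a, hmu_lt_lam⟩ := ha
  refine D.det_eq_zero_of_card_lt_of_eq_zero (Iic a) (Iio a) (by simp) fun i hi j hj => ?_
  replace hi : a ≤ i := not_lt.1 (by simpa using hi)
  replace hj : j ≤ a := by simpa using hj
  have hmu_le := Fin.antitone_add_val_of_strictAnti (fun i j h => hmu i j h) hi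
  have hlam_le := Fin.antitone_add_val_of_strictAnti (fun i j h => hlam i j h) hj
  have hji : (j : ℕ) ≤ i := hj.trans hi
  rw [hD]
  exact finsum_gbinom_mul_hsup_eq_zero β _ _ b c (by omega) (by simp only at hmu_le hlam_le; omega)

/-- Vanishing by containment.  With `λ, μ` strict partitions of length `r` and
`D_{ij} = Σ_{k≥0} β^k C(i-j,k) h_{μ_i - λ_j + k}(b₁,…,b_{λ_j}; -c₁,…,-c_{μ_i-1})`, if there
exists an index `a` with `λ_a > μ_a`, then `det D = 0`. -/
theorem stmt_11 {K : Type*} [Field K] [CharZero K] (β : K) (r : ℕ)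
    (lam mu : Fin r → ℕ) (b c : ℕ → K)
    (hlam : ∀ i j : Fin r, i < j → lam j < lam i) (hlampos : ∀ i, 0 < lam i)
    (hmu : ∀ i j : Fin r, i < j → mu j < mu i) (hmupos : ∀ i, 0 < mu i)
    (ha : ∃ a : Fin r, mu a < lam a)
    (D : Matrix (Fin r) (Fin r) K)
    (hD : ∀ i j, D i j = ∑ᶠ k : ℕ,
      β ^ k * gbinom (K := K) ((i : ℤ) - (j : ℤ)) k *
        hsup (lam j) (mu i - 1) b c ((mu i : ℤ) - (lam j : ℤ) + k)) :
    D.det = 0 :=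
  stmt_11_general β r lam mu b c hlam hmu ha D hD
end

section
/- The operators π_i = ∂_i ∘ (1+β b_{i+1}) satisfy the braid relation π_i π_{i+1} π_i = π_{i+1} π_i π_{i+1} on ℤ[β][b_1, b_2, …]. -/
/-!
The operator `π_i` only uses that `s_i` is an involutive ring automorphism swapping `b_i` and
`b_{i+1}` and fixing `β` and the other variables. With the braid relation
`s_i s_{i+1} s_i = s_{i+1} s_i s_{i+1}`, both sides of the claim become the same rational function
of `β, b_i, b_{i+1}, b_{i+2}` and the six translates `w f` (`w ∈ S₃`) of `f`, as one checks by
clearing denominators. As `β` is encoded as the variable `b_0`, it is fixed by `s_i` only for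
`i ≥ 1`.
-/

noncomputable section

/-- Fraction field of `ℤ[β][b₁,b₂,…]`: variable `0` is `β`, variable `i ≥ 1` is `b_i`. -/
abbrev FF : Type := FractionRing (MvPolynomial ℕ ℤ)

/-- The variables `b_i` (and `β = bb 0`) inside the fraction field. -/
def bb (i : ℕ) : FF := algebraMap (MvPolynomial ℕ ℤ) FF (MvPolynomial.X i)

/-- `β`. -/
def ββ : FF := bb 0

/-- The involution `s_i` exchanging `b_i` and `b_{i+1}`. -/
def sw (i : ℕ) : FF ≃+* FF :=
  IsFractionRing.ringEquivOfRingEquiv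
    ((MvPolynomial.renameEquiv ℤ (Equiv.swap i (i + 1))).toRingEquiv)

/-- Divided difference `∂_i f = (f - s_i f)/(b_i - b_{i+1})`. -/
def ddif (i : ℕ) (f : FF) : FF := (f - sw i f) / (bb i - bb (i + 1))

/-- The β-deformed divided difference operator `π_i = ∂_i ∘ (1 + β b_{i+1})`. -/
def pii (i : ℕ) (f : FF) : FF := ddif i ((1 + ββ * bb (i + 1)) * f)

/-- `pii i` is `deformedDivDiff (sw i) ββ (bb i) (bb (i + 1))`. -/
def deformedDivDiff {K : Type*} [Field K] (s : K ≃+* K) (β x y f : K) : K :=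
  ((1 + β * y) * f - s ((1 + β * y) * f)) / (x - y)

theorem deformedDivDiff_braid {K : Type*} [Field K] (s t : K ≃+* K) (β x y z : K)
    (hs : ∀ f, s (s f) = f) (ht : ∀ f, t (t f) = f) (hst : ∀ f, s (t (s f)) = t (s (t f)))
    (hsβ : s β = β) (hsx : s x = y) (hsz : s z = z)
    (htβ : t β = β) (htx : t x = x) (hty : t y = z)
    (hxy : x - y ≠ 0) (f : K) :
    deformedDivDiff s β x y (deformedDivDiff t β y z (deformedDivDiff s β x y f)) =
      deformedDivDiff t β y z (deformedDivDiff s β x y (deformedDivDiff t β y z f)) := by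
  have hsy : s y = x := by rw [← hsx, hs]
  have htz : t z = y := by rw [← hty, ht]
  have hxz : x - z ≠ 0 := by simpa [htx, hty] using (map_ne_zero t).2 hxy
  have hyz : y - z ≠ 0 := by simpa [hsx, hsz] using (map_ne_zero s).2 hxz
  simp only [deformedDivDiff, map_mul, map_add, map_sub, map_one, map_div₀,
    hsβ, hsx, hsy, hsz, htβ, htx, hty, htz, hs, ht, hst]
  -- `field_simp` needs the denominators literally in the form known to be nonzero.
  rw [show y - x = -(x - y) by ring, show z - y = -(y - z) by ring, div_neg, div_neg]
  field_simp
  ring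

theorem ringHom_ext_bb {φ ψ : FF →+* FF} (h : ∀ j, φ (bb j) = ψ (bb j)) : φ = ψ :=
  IsLocalization.ringHom_ext (nonZeroDivisors (MvPolynomial ℕ ℤ)) <|
    MvPolynomial.ringHom_ext (fun _ => by simp) h

theorem sw_bb (i j : ℕ) : sw i (bb j) = bb (Equiv.swap i (i + 1) j) := by
  simp [sw, bb]

theorem bb_injective : Function.Injective bb :=
  (IsFractionRing.injective (MvPolynomial ℕ ℤ) FF).comp MvPolynomial.X_injective

theorem sw_sw (i : ℕ) (f : FF) : sw i (sw i f) = f := by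
  have : (sw i : FF →+* FF).comp (sw i) = RingHom.id FF :=
    ringHom_ext_bb fun j => by simp [sw_bb]
  exact RingHom.congr_fun this f

theorem swap_braid_apply (i j : ℕ) :
    Equiv.swap i (i + 1) (Equiv.swap (i + 1) (i + 2) (Equiv.swap i (i + 1) j)) =
      Equiv.swap (i + 1) (i + 2) (Equiv.swap i (i + 1) (Equiv.swap (i + 1) (i + 2) j)) := by
  simp only [Equiv.swap_apply_def]
  split_ifs <;> omega

theorem sw_braid (i : ℕ) (f : FF) :
    sw i (sw (i + 1) (sw i f)) = sw (i + 1) (sw i (sw (i + 1) f)) := by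
  have : (sw i : FF →+* FF).comp ((sw (i + 1) : FF →+* FF).comp (sw i)) =
      (sw (i + 1) : FF →+* FF).comp ((sw i : FF →+* FF).comp (sw (i + 1))) :=
    ringHom_ext_bb fun j => by simpa [sw_bb] using congrArg bb (swap_braid_apply i j)
  exact RingHom.congr_fun this f

theorem sw_bb_of_ne {i j : ℕ} (h₀ : j ≠ i) (h₁ : j ≠ i + 1) : sw i (bb j) = bb j := by
  rw [sw_bb, Equiv.swap_apply_of_ne_of_ne h₀ h₁]

/-- The operators `π_i = ∂_i ∘ (1+β b_{i+1})` satisfy the braid relation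
`π_i π_{i+1} π_i = π_{i+1} π_i π_{i+1}` on `ℤ[β][b₁,b₂,…]` (stated on the field of
fractions, for all `i ≥ 1`). -/
theorem stmt_14 : ∀ i : ℕ, 1 ≤ i → ∀ f : FF,
    pii i (pii (i + 1) (pii i f)) = pii (i + 1) (pii i (pii (i + 1) f)) := by
  intro i hi f
  exact deformedDivDiff_braid (sw i) (sw (i + 1)) ββ (bb i) (bb (i + 1)) (bb (i + 2))
    (sw_sw i) (sw_sw (i + 1)) (sw_braid i)
    (sw_bb_of_ne (by omega) (by omega)) (by simp [sw_bb]) (sw_bb_of_ne (by omega) (by omega))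
    (sw_bb_of_ne (by omega) (by omega)) (sw_bb_of_ne (by omega) (by omega)) (by simp [sw_bb])
    (sub_ne_zero.2 (bb_injective.ne (by omega))) f

end
end

section
/- The operators T_i defined by T_i f = c(α_i)⁻¹ (s_i f - f) satisfy T_i² = β T_i, under the assumptions that s_i is an algebra involution fixing f ↦ f and s_i(c(α_i)) = ⊖c(α_i) = -c(α_i)/(1+βc(α_i)). -/
theorem RingHom.map_eq_neg_mul_of_mul_eq_one {A : Type*} [CommRing A] (s : A →+* A)
    {c c' u : A} (hc : c * c' = 1) (hsc : s c * u = -c) : s c' = -u * c' := by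
  have hsc' : s c * s c' = 1 := by rw [← map_mul, hc, map_one]
  linear_combination (c' * s c') * hsc - u * c' * hsc' - s c' * hc

theorem stmt_16_general {A : Type*} [CommRing A] (β : A) (s : A →+* A)
    (hinv : ∀ f, s (s f) = f)
    (c c' : A) (hc : c * c' = 1)
    (hsc : s c * (1 + β * c) = -c)
    (T : A → A) (hT : ∀ f, T f = c' * (s f - f)) :
    ∀ f, T (T f) = β * T f := by
  intro f
  have hsT : s (T f) = (1 + β * c) * T f := by
    rw [hT, map_mul, map_sub, hinv, s.map_eq_neg_mul_of_mul_eq_one hc hsc]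
    ring
  rw [hT (T f), hsT]
  linear_combination β * T f * hc

/-- The operators `T_i f = c(α_i)⁻¹ (s_i f - f)` satisfy `T_i² = β T_i`,
in the abstract setting: `A` a commutative ring (algebra over `ℚ(β)` in the application),
`s : A → A` a ring involution fixing `β`, `c = c(α_i)` invertible with `1 + βc`
invertible, and `s(c) = ⊖c(α_i) = -c/(1+βc)` (i.e. `s(c)·(1+βc) = -c`). -/
theorem stmt_16 {A : Type*} [CommRing A] (β : A) (s : A →+* A)
    (hinv : ∀ f, s (s f) = f) (hsβ : s β = β)
    (c c' d' : A) (hc : c * c' = 1) (hd : (1 + β * c) * d' = 1)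
    (hsc : s c * (1 + β * c) = -c)
    (T : A → A) (hT : ∀ f, T f = c' * (s f - f)) :
    ∀ f, T (T f) = β * T f :=
  stmt_16_general β s hinv c c' hc hsc T hT
end

section
/- Vandermonde-type determinant formula for factorial Grothendieck polynomials: for a partition λ of length ≤ r, Σ_{w∈S_r} w( ∏_{i=1}^r [x_i|b]^{λ_i+r-i} / ∏_{1≤i<j≤r}(x_i⊖x_j) ) = det( [x_i|b]^{λ_j+r-j} (1+βx_i)^{j-1} )_{1≤i,j≤r} / ∏_{1≤i<j≤r}(x_i - x_j). -/
/-!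
Conjugating by the denominators `1 + β x_{w j}` turns `∏_{i<j} (x_{w i} ⊖ x_{w j})` into
`sign w · ∏_{i<j} (x_i - x_j) / ∏_j (1 + β x_{w j})^j`, so the `w`-th summand on the left is
`sign w · ∏_i M_{w i, i} / ∏_{i<j} (x_i - x_j)` for the matrix `M` on the right, and summing over
`w` is the Leibniz expansion of `det M`.
-/

open Finset

theorem Fin.prod_prod_Ioi_eq_prod_pow {M : Type*} [CommMonoid M] {r : ℕ} (g : Fin r → M) :
    ∏ i : Fin r, ∏ j ∈ Ioi i, g j = ∏ j : Fin r, g j ^ (j : ℕ) := by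
  rw [prod_comm' (t' := univ) (s' := fun j => Iio j) (by simp [and_comm])]
  simp [Fin.card_Iio]

theorem Fin.prod_prod_Ioi_sub_comp_perm {R : Type*} [CommRing R] {r : ℕ} (v : Fin r → R)
    (w : Equiv.Perm (Fin r)) :
    ∏ i : Fin r, ∏ j ∈ Ioi i, (v (w i) - v (w j)) =
      Equiv.Perm.sign w * ∏ i : Fin r, ∏ j ∈ Ioi i, (v i - v j) := by
  -- `det_vandermonde` gives `∏ (v j - v i)`; working with `-v` flips the orientation.
  have hperm : Matrix.vandermonde (-v ∘ w) = (Matrix.vandermonde (-v)).submatrix w id := by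
    ext i j
    simp [Matrix.vandermonde]
  have := congrArg Matrix.det hperm
  rw [Matrix.det_permute, Matrix.det_vandermonde, Matrix.det_vandermonde] at this
  simpa [sub_eq_add_neg, add_comm] using this

theorem prod_prod_Ioi_sub_div_comp_perm {K : Type*} [Field K] {r : ℕ} (β : K) (x : Fin r → K)
    (w : Equiv.Perm (Fin r)) :
    ∏ i : Fin r, ∏ j ∈ Ioi i, ((x (w i) - x (w j)) / (1 + β * x (w j))) =
      Equiv.Perm.sign w * (∏ i : Fin r, ∏ j ∈ Ioi i, (x i - x j)) /
        ∏ j : Fin r, (1 + β * x (w j)) ^ (j : ℕ) := by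
  simp only [prod_div_distrib]
  rw [Fin.prod_prod_Ioi_sub_comp_perm, Fin.prod_prod_Ioi_eq_prod_pow (fun j => 1 + β * x (w j))]

theorem div_intUnit_mul_div {K : Type*} [Field K] (ε : ℤˣ) (a v q : K) :
    a / (ε * v / q) = ε * (a * q) / v := by
  rcases Int.units_eq_one_or ε with rfl | rfl <;>
    · simp only [Units.val_one, Units.val_neg, Int.cast_one, Int.cast_neg, div_eq_mul_inv,
        mul_inv, inv_inv]
      ring

theorem stmt_18_general {K : Type*} [Field K] (r : ℕ) (β : K) (x : Fin r → K) (b : ℕ → K)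
    (lam : Fin r → ℕ) :
    ∑ w : Equiv.Perm (Fin r),
      (∏ i : Fin r, ∏ k ∈ Finset.range (lam i + (r - 1 - (i : ℕ))),
          ((x (w i) - b k) / (1 + β * b k))) /
        ∏ i : Fin r, ∏ j ∈ Finset.Ioi i,
          ((x (w i) - x (w j)) / (1 + β * x (w j))) =
    (Matrix.det (fun i j : Fin r =>
        (∏ k ∈ Finset.range (lam j + (r - 1 - (j : ℕ))),
          ((x i - b k) / (1 + β * b k))) * (1 + β * x i) ^ (j : ℕ))) /
      ∏ i : Fin r, ∏ j ∈ Finset.Ioi i, (x i - x j) := by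
  -- `erw`: the determinant is taken of a bare function, not of a term of type `Matrix`.
  erw [Matrix.det_apply', sum_div]
  refine sum_congr rfl fun w _ => ?_
  rw [prod_prod_Ioi_sub_div_comp_perm, prod_mul_distrib, div_intUnit_mul_div]

/-- Vandermonde-type determinant formula for factorial Grothendieck
polynomials: for a partition `λ` of length `≤ r`,
`Σ_{w∈S_r} w(∏_i [x_i|b]^{λ_i+r-i} / ∏_{i<j}(x_i⊖x_j))
  = det([x_i|b]^{λ_j+r-j} (1+βx_i)^{j-1}) / ∏_{i<j}(x_i - x_j)`,
where `[x|b]^k = (x⊖b₁)⋯(x⊖b_k)` and `x⊖y = (x-y)/(1+βy)`.  With 0-indexed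
`i, j : Fin r`, the exponent `λ_j + r - j` (1-indexed) reads `λ j + (r - 1 - j)`, and
`(1+βx_i)^{j-1}` reads `(1+βx_i)^j`. -/
theorem stmt_18 {K : Type*} [Field K] (r : ℕ) (β : K) (x : Fin r → K) (b : ℕ → K)
    (lam : Fin r → ℕ) (hlam : Antitone lam)
    (hx : Function.Injective x)
    (hxu : ∀ i, 1 + β * x i ≠ 0) (hbu : ∀ j, 1 + β * b j ≠ 0) :
    ∑ w : Equiv.Perm (Fin r),
      (∏ i : Fin r, ∏ k ∈ Finset.range (lam i + (r - 1 - (i : ℕ))),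
          ((x (w i) - b k) / (1 + β * b k))) /
        ∏ i : Fin r, ∏ j ∈ Finset.Ioi i,
          ((x (w i) - x (w j)) / (1 + β * x (w j))) =
    (Matrix.det (fun i j : Fin r =>
        (∏ k ∈ Finset.range (lam j + (r - 1 - (j : ℕ))),
          ((x i - b k) / (1 + β * b k))) * (1 + β * x i) ^ (j : ℕ))) /
      ∏ i : Fin r, ∏ j ∈ Finset.Ioi i, (x i - x j) :=
  stmt_18_general r β x b lam
end
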